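/- arXiv:2406.16930 — 2 statements merged into one kernel-verified Lean document; each statement's English description precedes it below -/
import Mathlib

section
/- In the multiscale LDDMM setting, let t ↦ (q(t), p(t), u(t)) be a normal geodesic associated to the Hamiltonian H_{Q_L}(q,p,u) = (p | ξ_q(u^L)) − ½|Au|²_V, and set v = Au. Then for every 1 ≤ l ≤ L, v^l = K^l(ξ_q* p), and u^L = Σ_{l≤L} K^l(ξ_q* p). -/
open scoped Manifold RealInnerProductSpace ENNReal NNReal
open MeasureTheory Filter

noncomputable section
/-- `AC_{L^p}([a,b],E)`: absolutely continuous curves on `[a,b]` with values in the Banach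
space `E` admitting an `L^p` derivative `γ`, i.e. `η t = η a + ∫_a^t γ s ds`. -/
def ACLp {E : Type*} [NormedAddCommGroup E] [NormedSpace ℝ E]
    (p : ℝ≥0∞) (a b : ℝ) (η : ℝ → E) : Prop :=
  ContinuousOn η (Set.Icc a b) ∧
    ∃ γ : ℝ → E, MemLp γ p (volume.restrict (Set.Icc a b)) ∧
      ∀ t ∈ Set.Icc a b, η t = η a + ∫ s in a..t, γ s

/-- `AC_{L^p}(S, M)` for a Banach manifold `M`: continuous on `S`, and absolutely continuous
with `L^p` derivative read in every chart of the atlas. -/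
def MACLp {E : Type*} [NormedAddCommGroup E] [NormedSpace ℝ E]
    {M : Type*} [TopologicalSpace M] [ChartedSpace E M]
    (p : ℝ≥0∞) (S : Set ℝ) (η : ℝ → M) : Prop :=
  ContinuousOn η S ∧
    ∀ c ∈ atlas E M, ∀ a b : ℝ, Set.Icc a b ⊆ S →
      (∀ t ∈ Set.Icc a b, η t ∈ c.source) → ACLp p a b fun t => c (η t)
/-- The iterated inclusion `G^{k+l} → G^k` induced by the inclusions `G^{k+1} → G^k`. -/
def inclN {G : ℕ → Type*} [∀ k, Group (G k)] (ι : ∀ k, G (k+1) →* G k) (k : ℕ) :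
    ∀ l : ℕ, G (k + l) →* G k
  | 0 => MonoidHom.id _
  | (l+1) => (inclN ι k l).comp (ι (k + l))

variable (B : ℕ → Type*) [∀ k, NormedAddCommGroup (B k)] [∀ k, NormedSpace ℝ (B k)]
  (G : ℕ → Type*) [∀ k, Group (G k)] [∀ k, TopologicalSpace (G k)]
  [∀ k, ChartedSpace (B k) (G k)] [∀ k, IsManifold (𝓘(ℝ, B k)) ((⊤ : ℕ∞) : WithTop ℕ∞) (G k)]
  (ι : ∀ k, G (k+1) →* G k)

/-- `T_eR_g : T_eG^{k+l} → T_gG^k`, differential at the identity of the right translation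
`h ↦ h·g`, written in the canonical trivialisation of the tangent spaces. -/
def TeRight (k l : ℕ) (g : G k) : B (k + l) →L[ℝ] B k :=
  (mfderiv 𝓘(ℝ, B (k + l)) 𝓘(ℝ, B k) (fun h : G (k + l) => inclN ι k l h * g) 1 :
    TangentSpace 𝓘(ℝ, B (k + l)) (1 : G (k + l)) →L[ℝ]
      TangentSpace 𝓘(ℝ, B k) (inclN ι k l 1 * g))

/-- `T_eL_g : T_eG^k → T_gG^k`, differential at the identity of the left translation by
`g ∈ G^{k+l}`, in the canonical trivialisation. -/
def TeLeft (k l : ℕ) (g : G (k + l)) : B k →L[ℝ] B k :=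
  (mfderiv 𝓘(ℝ, B k) 𝓘(ℝ, B k) (fun h : G k => inclN ι k l g * h) 1 :
    TangentSpace 𝓘(ℝ, B k) (1 : G k) →L[ℝ] TangentSpace 𝓘(ℝ, B k) (inclN ι k l g * 1))

/-- `T_e` of the inclusion `G^{k+l} → G^k`. -/
def TeIncl (k l : ℕ) : B (k + l) →L[ℝ] B k :=
  (mfderiv 𝓘(ℝ, B (k + l)) 𝓘(ℝ, B k) (fun h : G (k + l) => inclN ι k l h) 1 :
    TangentSpace 𝓘(ℝ, B (k + l)) (1 : G (k + l)) →L[ℝ]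
      TangentSpace 𝓘(ℝ, B k) (inclN ι k l (1 : G (k + l))))

/-- The adjoint representation `Ad_g : T_eG^k → T_eG^k`, `g ∈ G^{k+1}`: the differential at
the identity of the conjugation `h ↦ ghg⁻¹`. -/
def AdMap (k : ℕ) (g : G (k+1)) : B k →L[ℝ] B k :=
  (mfderiv 𝓘(ℝ, B k) 𝓘(ℝ, B k) (fun h : G k => ι k g * h * (ι k g)⁻¹) 1 :
    TangentSpace 𝓘(ℝ, B k) (1 : G k) →L[ℝ]
      TangentSpace 𝓘(ℝ, B k) (ι k g * 1 * (ι k g)⁻¹))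

/-- The left infinitesimal action `T_eG^{k+l} × G^k → TG^k`, `(u,g) ↦ T_eR_g(u)`. -/
def leftInfMap (k l : ℕ) (p : B (k + l) × G k) : TangentBundle 𝓘(ℝ, B k) (G k) :=
  ⟨inclN ι k l 1 * p.2,
    mfderiv 𝓘(ℝ, B (k + l)) 𝓘(ℝ, B k) (fun h : G (k + l) => inclN ι k l h * p.2) 1 p.1⟩

/-- The right infinitesimal action `G^{k+1} × T_eG^k → TG^k`, `(g,u) ↦ T_eL_g(u)`. -/
def rightInfMap (k : ℕ) (p : G (k+1) × B k) : TangentBundle 𝓘(ℝ, B k) (G k) :=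
  ⟨ι k p.1 * 1, mfderiv 𝓘(ℝ, B k) 𝓘(ℝ, B k) (fun h : G k => ι k p.1 * h) 1 p.2⟩

/-- Conditions (G.1)–(G.5): `{G^k}` is an admissible graded group structure. -/
structure IsGradedGroup : Prop where
  incl_injective : ∀ k, Function.Injective (ι k)
  incl_smooth : ∀ k, ContMDiff 𝓘(ℝ, B (k+1)) 𝓘(ℝ, B k) (⊤ : ℕ∞) (ι k)
  inv_cl : ∀ k l : ℕ,
    ContMDiff 𝓘(ℝ, B (k+l)) 𝓘(ℝ, B k) l fun g : G (k+l) => inclN ι k l g⁻¹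
  mul_cl : ∀ k l : ℕ,
    ContMDiff ((𝓘(ℝ, B (k+l))).prod 𝓘(ℝ, B k)) 𝓘(ℝ, B k) l
      fun p : G (k+l) × G k => inclN ι k l p.1 * p.2
  mul_smooth_fst : ∀ (k l : ℕ) (g : G k),
    ContMDiff 𝓘(ℝ, B (k+l)) 𝓘(ℝ, B k) (⊤ : ℕ∞) fun g' : G (k+l) => inclN ι k l g' * g
  leftInf_cl : ∀ k l : ℕ,
    ContMDiff ((𝓘(ℝ, B (k+l))).prod 𝓘(ℝ, B k)) (𝓘(ℝ, B k)).tangent l (leftInfMap B G ι k l)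
  leftInf_smooth_fst : ∀ (k l : ℕ) (g : G k),
    ContMDiff 𝓘(ℝ, B (k+l)) (𝓘(ℝ, B k)).tangent (⊤ : ℕ∞) fun u : B (k+l) => leftInfMap B G ι k l (u, g)
  rightInf_c1 : ∀ k : ℕ,
    ContMDiff ((𝓘(ℝ, B (k+1))).prod 𝓘(ℝ, B k)) (𝓘(ℝ, B k)).tangent 1 (rightInfMap B G ι k)
variable (F : Type*) [NormedAddCommGroup F] [NormedSpace ℝ F]
  (Q : Type*) [TopologicalSpace Q] [ChartedSpace F Q] [IsManifold 𝓘(ℝ, F) ((⊤ : ℕ∞) : WithTop ℕ∞) Q]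
  (k₀ : ℕ) (act : G k₀ → Q → Q)
  (V : Type*) [NormedAddCommGroup V] [InnerProductSpace ℝ V] [CompleteSpace V]
  (j : V →L[ℝ] B (k₀ + 2))

/-- The infinitesimal action `ξ_q : T_eG^{k₀+l} → T_qQ` (differential at the identity of
`g ↦ g·q`), in the canonical trivialisation. -/
def xiL (l : ℕ) (q : Q) : B (k₀ + l) →L[ℝ] F :=
  (mfderiv 𝓘(ℝ, B (k₀ + l)) 𝓘(ℝ, F) (fun g : G (k₀ + l) => act (inclN ι k₀ l g) q) 1 :
    TangentSpace 𝓘(ℝ, B (k₀ + l)) (1 : G (k₀ + l)) →L[ℝ]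
      TangentSpace 𝓘(ℝ, F) (act (inclN ι k₀ l 1) q))

/-- The infinitesimal action `ξ : T_eG^{k₀+l} × Q → TQ` as a map into the tangent bundle. -/
def xiMap (l : ℕ) (p : B (k₀ + l) × Q) : TangentBundle 𝓘(ℝ, F) Q :=
  ⟨act (inclN ι k₀ l 1) p.2,
   mfderiv 𝓘(ℝ, B (k₀ + l)) 𝓘(ℝ, F) (fun g : G (k₀ + l) => act (inclN ι k₀ l g) p.2) 1 p.1⟩

/-- Conditions (S.1)–(S.3) on the action of `G^{k₀}` on the shape space `Q`. -/
structure IsShapeAction : Prop where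
  act_mul : ∀ g g' q, act (g * g') q = act g (act g' q)
  act_one : ∀ q, act 1 q = q
  act_cont : Continuous fun p : G k₀ × Q => act p.1 p.2
  act_smooth_g : ∀ q : Q, ContMDiff 𝓘(ℝ, B k₀) 𝓘(ℝ, F) (⊤ : ℕ∞) fun g : G k₀ => act g q
  act_cl : ∀ l : ℕ, 0 < l →
    ContMDiff ((𝓘(ℝ, B (k₀ + l))).prod 𝓘(ℝ, F)) 𝓘(ℝ, F) l
      fun p : G (k₀ + l) × Q => act (inclN ι k₀ l p.1) p.2
  xi_cl : ∀ l : ℕ, 0 < l →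
    ContMDiff ((𝓘(ℝ, B (k₀ + l))).prod 𝓘(ℝ, F)) (𝓘(ℝ, F)).tangent l
      (xiMap B G ι F Q k₀ act l)

/-- `ξ_q(v)` for a control `v ∈ V ⊆ T_eG^{k₀+2}`. -/
def xiV (q : Q) (v : V) : F := xiL B G ι F Q k₀ act 2 q (j v)

/-- The horizontality condition `q̇(t) = ξ_{q(t)}(u(t))` at time `t` (within `S ⊆ ℝ`). -/
def HorizontalAt (q : ℝ → Q) (u : ℝ → V) (S : Set ℝ) (t : ℝ) : Prop :=
  HasMFDerivWithinAt 𝓘(ℝ, ℝ) 𝓘(ℝ, F) q S t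
    (ContinuousLinearMap.smulRight (1 : ℝ →L[ℝ] ℝ) (xiV B G ι F Q k₀ act V j (q t) (u t)))

/-- A horizontal system `(q,u)` on `I = [0,1]`. -/
def HorizontalSystem (q : ℝ → Q) (u : ℝ → V) : Prop :=
  MACLp (E := F) 2 (Set.Icc 0 1) q ∧ MemLp u 2 (volume.restrict (Set.Icc (0:ℝ) 1)) ∧
    ∀ᵐ t ∂(volume.restrict (Set.Icc (0:ℝ) 1)),
      HorizontalAt B G ι F Q k₀ act V j q u (Set.Icc 0 1) t

/-- Length of a horizontal system. -/
def pathLength (u : ℝ → V) : ℝ := ∫ t in (0:ℝ)..1, ‖u t‖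

/-- Energy of a horizontal system. -/
def pathEnergy (u : ℝ → V) : ℝ := (1/2) * ∫ t in (0:ℝ)..1, ‖u t‖^2

/-- The sub-Riemannian distance `d_V` on `Q` induced by `V`. -/
def subDist (q₀ q₁ : Q) : ℝ≥0∞ :=
  sInf {r : ℝ≥0∞ | ∃ (q : ℝ → Q) (u : ℝ → V), HorizontalSystem B G ι F Q k₀ act V j q u ∧
    q 0 = q₀ ∧ q 1 = q₁ ∧ r = ENNReal.ofReal (pathLength V u)}
/-- The inverse `K_V : V* → V` of the Riesz isometry of the Hilbert space `V`. -/
def KV (f : V →L[ℝ] ℝ) : V := (InnerProductSpace.toDual ℝ V).symm f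

/-- The momentum map `m_Q(q,p) = ξ_q^*(p) ∈ (T_eG^{k₀})^*`. -/
def momMap (q : Q) (p : F →L[ℝ] ℝ) : B k₀ →L[ℝ] ℝ :=
  p.comp (xiL B G ι F Q k₀ act 0 q)

/-- Restriction of a momentum `m ∈ (T_eG^{k₀})^*` to a functional on `V ⊆ T_eG^{k₀+2}`. -/
def momV (m : B k₀ →L[ℝ] ℝ) : V →L[ℝ] ℝ := m.comp ((TeIncl B G ι k₀ 2).comp j)

/-- The optimal control `u(q,p) = K_V ξ_q^*(p)`. -/
def uOpt (q : Q) (p : F →L[ℝ] ℝ) : V :=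
  KV V (momV B G ι k₀ V j (momMap B G ι F Q k₀ act q p))

/-- `∂_q (ξ_q(u))` at `q` applied in the direction of the control `v ∈ V`, in the canonical
trivialisation. -/
def DxiQfull (q : Q) : F →L[ℝ] (B (k₀ + 2) →L[ℝ] F) :=
  (mfderiv 𝓘(ℝ, F) 𝓘(ℝ, B (k₀ + 2) →L[ℝ] F) (fun q' : Q => xiL B G ι F Q k₀ act 2 q') q :
    TangentSpace 𝓘(ℝ, F) q →L[ℝ]
      TangentSpace 𝓘(ℝ, B (k₀ + 2) →L[ℝ] F) (xiL B G ι F Q k₀ act 2 q))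

def DxiQ (q : Q) (v : V) : F →L[ℝ] F :=
  (DxiQfull B G ι F Q k₀ act q).flip (j v)

/-- The normal Hamiltonian equations on `I = [0,1]` for the Hamiltonian
`H_Q(q,p,u) = (p | ξ_q(u)) - ½|u|²_V`:
`q̇ = ∂_p H_Q`, `ṗ = -∂_q H_Q` and `∂_u H_Q = 0`,
with momentum trajectory `p ∈ AC_{L¹}(I, T*Q)`. -/
structure NormalHamiltonianOn (q : ℝ → Q) (p : ℝ → F →L[ℝ] ℝ) (u : ℝ → V) : Prop where
  p_ac : ACLp 1 0 1 p
  state_eq : ∀ᵐ t ∂(volume.restrict (Set.Icc (0:ℝ) 1)),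
    HorizontalAt B G ι F Q k₀ act V j q u (Set.Icc 0 1) t
  costate_eq : ∀ᵐ t ∂(volume.restrict (Set.Icc (0:ℝ) 1)),
    HasDerivWithinAt p (-((p t).comp (DxiQ B G ι F Q k₀ act V j (q t) (u t))))
      (Set.Icc 0 1) t
  optimality : ∀ᵐ t ∂(volume.restrict (Set.Icc (0:ℝ) 1)),
    ∀ v : V, p t (xiV B G ι F Q k₀ act V j (q t) v) = ⟪u t, v⟫

/-- The (reduced) Hamiltonian geodesic flow, globally in time:
`q̇ = ∂_p h(q,p)`, `ṗ = -∂_q h(q,p)` with optimal control `u(q,p) = K_V ξ_q^*(p)`,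
and the flow is `C¹`. -/
structure GlobalReducedFlow (q : ℝ → Q) (p : ℝ → F →L[ℝ] ℝ) : Prop where
  smooth_q : ContMDiff 𝓘(ℝ, ℝ) 𝓘(ℝ, F) 1 q
  smooth_p : ContDiff ℝ 1 p
  state_eq : ∀ t : ℝ,
    HorizontalAt B G ι F Q k₀ act V j q
      (fun s => uOpt B G ι F Q k₀ act V j (q s) (p s)) Set.univ t
  costate_eq : ∀ t : ℝ,
    HasDerivAt p (-((p t).comp
      (DxiQ B G ι F Q k₀ act V j (q t) (uOpt B G ι F Q k₀ act V j (q t) (p t))))) t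

variable (VS : ℕ → Type*) [∀ n, NormedAddCommGroup (VS n)]
  [∀ n, InnerProductSpace ℝ (VS n)] [∀ n, CompleteSpace (VS n)]
  (emb : ∀ n m : ℕ, VS n →L[ℝ] VS m)

/-- The operator `A : V → V`, `Au = (u¹, u² − u¹, …, u^L − u^{L−1})` (for controls with
`u 0 = 0`). -/
def Aop (u : ∀ n, VS n) : ∀ n, VS n
  | 0 => u 0
  | (m+1) => u (m+1) - emb m (m+1) (u m)

/-!
Testing the optimality condition `∂_u H = 0` against the variation that is `w ∈ V_l` at scale
`l` and is carried unchanged to all finer scales isolates the `l`-th component of `A`, since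
`A` of that variation is `w` at scale `l` and `0` elsewhere. This identifies `(Au)^l` through
the Riesz map of `V_l`, and `u^L` is recovered from `Au` by telescoping.
-/

theorem eq_KV_of_inner_eq {V : Type*} [NormedAddCommGroup V] [InnerProductSpace ℝ V]
    [CompleteSpace V] {x : V} {f : V →L[ℝ] ℝ} (h : ∀ w, ⟪x, w⟫ = f w) : x = KV V f := by
  rw [KV, LinearIsometryEquiv.eq_symm_apply]
  ext w
  exact h w

section Multiscale

variable {VS}

def embFrom (l : ℕ) (w : VS l) (n : ℕ) : VS n :=
  if l ≤ n then emb l n w else 0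

variable {emb}

omit [∀ n, CompleteSpace (VS n)] in
theorem Aop_embFrom (hemb_id : ∀ n, emb n n = ContinuousLinearMap.id ℝ (VS n))
    (hemb_comp : ∀ n m r : ℕ, n ≤ m → m ≤ r → (emb m r).comp (emb n m) = emb n r)
    (l : ℕ) (w : VS l) : Aop VS emb (embFrom emb l w) = Pi.single l w := by
  funext n
  cases n with
  | zero =>
    by_cases hl : l = 0
    · subst hl
      simp [Aop, embFrom, hemb_id]
    · simp [Aop, embFrom, hl]
  | succ m =>
    rcases lt_trichotomy l (m + 1) with hlt | rfl | hgt
    · have hlm : l ≤ m := Nat.le_of_lt_succ hlt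
      rw [Pi.single_eq_of_ne hlt.ne', Aop, embFrom, embFrom, if_pos hlt.le, if_pos hlm,
        ← hemb_comp l m (m + 1) hlm m.le_succ, ContinuousLinearMap.comp_apply, sub_self]
    · simp [Aop, embFrom, hemb_id]
    · simp [Aop, embFrom, hgt.ne', Nat.not_le.mpr hgt, Nat.not_le.mpr (m.lt_succ_self.trans hgt)]

omit [∀ n, CompleteSpace (VS n)] in
theorem sum_emb_Aop (hemb_id : ∀ n, emb n n = ContinuousLinearMap.id ℝ (VS n))
    (hemb_comp : ∀ n m r : ℕ, n ≤ m → m ≤ r → (emb m r).comp (emb n m) = emb n r)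
    (u : ∀ n, VS n) (hu0 : u 0 = 0) (L : ℕ) :
    ∑ l ∈ Finset.Icc 1 L, emb l L (Aop VS emb u l) = u L := by
  induction L with
  | zero => simp [hu0]
  | succ L ih =>
    have hcomp : ∀ l ∈ Finset.Icc 1 L,
        emb l (L + 1) (Aop VS emb u l) = emb L (L + 1) (emb l L (Aop VS emb u l)) := by
      intro l hl
      rw [← hemb_comp l L (L + 1) (Finset.mem_Icc.mp hl).2 L.le_succ]
      rfl
    rw [Finset.sum_Icc_succ_top (Nat.le_add_left 1 L), Finset.sum_congr rfl hcomp, ← map_sum,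
      ih, hemb_id]
    simp [Aop]

theorem Aop_eq_KV_of_optimality (hemb_id : ∀ n, emb n n = ContinuousLinearMap.id ℝ (VS n))
    (hemb_comp : ∀ n m r : ℕ, n ≤ m → m ≤ r → (emb m r).comp (emb n m) = emb n r)
    {L : ℕ} (f : VS L →L[ℝ] ℝ) (u : ∀ n, VS n)
    (hopt : ∀ δ : ∀ n, VS n, δ 0 = 0 →
      f (δ L) = ∑ l ∈ Finset.Icc 1 L, ⟪Aop VS emb u l, Aop VS emb δ l⟫)
    {l : ℕ} (hl : 1 ≤ l) (hlL : l ≤ L) :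
    Aop VS emb u l = KV (VS l) (f.comp (emb l L)) := by
  refine eq_KV_of_inner_eq fun w => ?_
  have hδ0 : embFrom emb l w 0 = 0 := if_neg (by omega)
  have hδL : embFrom emb l w L = emb l L w := if_pos hlL
  have hopt_w := hopt _ hδ0
  rw [hδL, Aop_embFrom hemb_id hemb_comp,
    Finset.sum_eq_single_of_mem l (Finset.mem_Icc.mpr ⟨hl, hlL⟩)
      fun n _ hn => by rw [Pi.single_eq_of_ne hn, inner_zero_right],
    Pi.single_eq_same] at hopt_w
  exact hopt_w.symm

end Multiscale

variable (L : ℕ) (jL : VS L →L[ℝ] B (k₀ + 2))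

theorem multiscale_normal_geodesic_controls
    (hemb_id : ∀ n, emb n n = ContinuousLinearMap.id ℝ (VS n))
    (hemb_comp : ∀ n m r : ℕ, n ≤ m → m ≤ r → (emb m r).comp (emb n m) = emb n r)
    (q : ℝ → Q) (p : ℝ → F →L[ℝ] ℝ) (u : ℝ → ∀ n, VS n)
    (hu0 : ∀ t, u t 0 = 0)
    -- the optimality condition `∂_u H_{Q_L}(q,p,u) = 0`
    (hopt : ∀ᵐ t ∂(volume.restrict (Set.Icc (0:ℝ) 1)),
      ∀ δ : ∀ n, VS n, δ 0 = 0 →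
        p t (xiV B G ι F Q k₀ act (VS L) jL (q t) (δ L)) =
          ∑ l ∈ Finset.Icc 1 L, ⟪Aop VS emb (u t) l, Aop VS emb δ l⟫) :
    ∀ᵐ t ∂(volume.restrict (Set.Icc (0:ℝ) 1)),
      (∀ l, 1 ≤ l → l ≤ L →
        Aop VS emb (u t) l =
          KV (VS l) (((p t).comp (xiL B G ι F Q k₀ act 2 (q t))).comp
            (jL.comp (emb l L)))) ∧
      u t L = ∑ l ∈ Finset.Icc 1 L,
        emb l L (KV (VS l) (((p t).comp (xiL B G ι F Q k₀ act 2 (q t))).comp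
          (jL.comp (emb l L)))) := by
  filter_upwards [hopt] with t ht
  have hA : ∀ l, 1 ≤ l → l ≤ L → Aop VS emb (u t) l =
      KV (VS l) (((p t).comp (xiL B G ι F Q k₀ act 2 (q t))).comp (jL.comp (emb l L))) :=
    fun l hl hlL => Aop_eq_KV_of_optimality hemb_id hemb_comp
      (((p t).comp (xiL B G ι F Q k₀ act 2 (q t))).comp jL) (u t) ht hl hlL
  refine ⟨hA, ?_⟩
  rw [← sum_emb_Aop hemb_id hemb_comp (u t) (hu0 t) L]
  refine Finset.sum_congr rfl fun l hl => ?_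
  rw [hA l (Finset.mem_Icc.mp hl).1 (Finset.mem_Icc.mp hl).2]
end
end

section
/- In the multiscale LDDMM setting with all scales controlled, let t ↦ (q(t), p(t), u(t)), with q = (q^l)_{1≤l≤L} and p = (p^l)_{1≤l≤L}, be a normal geodesic associated to the Hamiltonian H_Q(q,p,u) = Σ_{l=1}^L (p^l | ξ_{q^l}(u^l)) − ½|Au|²_V, and set v = Au. Then for every 1 ≤ l ≤ L, v^l = K^l(Σ_{m≥l} ξ_{q^m}* p^m), and u^l = Σ_{k≤l} K^k(Σ_{m≥k} ξ_{q^m}* p^m). -/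
/-! The optimality condition is tested against the control `δ` equal to `w ∈ V_l` embedded in
every level `≥ l` and to `0` below: `Aδ` is `w` at level `l` and `0` elsewhere, so the
condition says that `(Au)^l` is the Riesz representative in `V_l` of `Σ_{m ≥ l} ξ_{q^m}^* p^m`.
Since `u⁰ = 0`, `u` is recovered from `Au` by telescoping. -/

open scoped Manifold RealInnerProductSpace ENNReal NNReal
open MeasureTheory Filter

noncomputable section
variable (B : ℕ → Type*) [∀ k, NormedAddCommGroup (B k)] [∀ k, NormedSpace ℝ (B k)]
  (G : ℕ → Type*) [∀ k, Group (G k)] [∀ k, TopologicalSpace (G k)]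
  [∀ k, ChartedSpace (B k) (G k)] [∀ k, IsManifold (𝓘(ℝ, B k)) (⊤ : ℕ∞) (G k)]
  (ι : ∀ k, G (k+1) →* G k)

variable (F : Type*) [NormedAddCommGroup F] [NormedSpace ℝ F]
  (Q : Type*) [TopologicalSpace Q] [ChartedSpace F Q] [IsManifold 𝓘(ℝ, F) (⊤ : ℕ∞) Q]
  (k₀ : ℕ) (act : G k₀ → Q → Q)
  (V : Type*) [NormedAddCommGroup V] [InnerProductSpace ℝ V] [CompleteSpace V]
  (j : V →L[ℝ] B (k₀ + 2))

variable (VS : ℕ → Type*) [∀ n, NormedAddCommGroup (VS n)]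
  [∀ n, InnerProductSpace ℝ (VS n)] [∀ n, CompleteSpace (VS n)]
  (emb : ∀ n m : ℕ, VS n →L[ℝ] VS m)

section Controls

variable {VS}

def embedFrom (l : ℕ) (w : VS l) : ∀ n, VS n := fun n => if l ≤ n then emb l n w else 0

variable {emb}

omit [∀ n, CompleteSpace (VS n)] in
theorem embedFrom_zero {l : ℕ} (hl : 0 < l) (w : VS l) : embedFrom emb l w 0 = 0 :=
  if_neg (by omega)

omit [∀ n, CompleteSpace (VS n)] in
theorem Aop_embedFrom (hemb_id : ∀ n, emb n n = ContinuousLinearMap.id ℝ (VS n))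
    (hemb_comp : ∀ n m r : ℕ, n ≤ m → m ≤ r → (emb m r).comp (emb n m) = emb n r)
    (l : ℕ) (w : VS l) : Aop VS emb (embedFrom emb l w) = Pi.single l w := by
  funext n
  cases n with
  | zero =>
    rcases Nat.eq_zero_or_pos l with rfl | hl
    · simp [Aop, embedFrom, hemb_id]
    · simp [Aop, embedFrom_zero hl, hl.ne']
  | succ m =>
    simp only [Aop, embedFrom]
    rcases lt_trichotomy l (m + 1) with hlt | rfl | hgt
    · rw [if_pos hlt.le, if_pos (Nat.le_of_lt_succ hlt), ← ContinuousLinearMap.comp_apply,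
        hemb_comp _ _ _ (Nat.le_of_lt_succ hlt) m.le_succ, sub_self,
        Pi.single_eq_of_ne hlt.ne']
    · simp [hemb_id]
    · rw [if_neg (by omega), if_neg (by omega), map_zero, sub_zero,
        Pi.single_eq_of_ne (by omega)]

omit [∀ n, CompleteSpace (VS n)] in
theorem eq_sum_emb_Aop (hemb_id : ∀ n, emb n n = ContinuousLinearMap.id ℝ (VS n))
    (hemb_comp : ∀ n m r : ℕ, n ≤ m → m ≤ r → (emb m r).comp (emb n m) = emb n r)
    {u : ∀ n, VS n} (hu0 : u 0 = 0) (l : ℕ) :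
    u l = ∑ k ∈ Finset.Icc 1 l, emb k l (Aop VS emb u k) := by
  induction l with
  | zero => simp [hu0]
  | succ m ih =>
    have hlower :
        ∑ k ∈ Finset.Icc 1 m, emb k (m + 1) (Aop VS emb u k) = emb m (m + 1) (u m) := by
      rw [ih, map_sum]
      refine Finset.sum_congr rfl fun k hk => ?_
      rw [← ContinuousLinearMap.comp_apply, hemb_comp _ _ _ (Finset.mem_Icc.mp hk).2 m.le_succ]
    rw [Finset.sum_Icc_succ_top (by omega), hlower, hemb_id, ContinuousLinearMap.id_apply]
    exact (add_sub_cancel _ _).symm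

theorem eq_KV_sum_comp_emb (hemb_id : ∀ n, emb n n = ContinuousLinearMap.id ℝ (VS n))
    (hemb_comp : ∀ n m r : ℕ, n ≤ m → m ≤ r → (emb m r).comp (emb n m) = emb n r)
    {N : ℕ} (f : ∀ n, VS n →L[ℝ] ℝ) (a : ∀ n, VS n)
    (h : ∀ δ : ∀ n, VS n, δ 0 = 0 →
      ∑ k ∈ Finset.Icc 1 N, f k (δ k) = ∑ k ∈ Finset.Icc 1 N, ⟪a k, Aop VS emb δ k⟫)
    {l : ℕ} (hl : 1 ≤ l) (hlN : l ≤ N) :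
    a l = KV (VS l) (∑ m ∈ Finset.Icc l N, (f m).comp (emb l m)) := by
  rw [KV, eq_comm, LinearIsometryEquiv.symm_apply_eq]
  ext w
  simp only [sum_apply, ContinuousLinearMap.comp_apply,
    InnerProductSpace.toDual_apply_apply]
  calc ∑ m ∈ Finset.Icc l N, f m (emb l m w)
      = ∑ k ∈ Finset.Icc 1 N, f k (embedFrom emb l w k) := by
        refine Finset.sum_subset_zero_on_sdiff (Finset.Icc_subset_Icc hl le_rfl) ?_ ?_
        · intro k hk
          simp only [Finset.mem_sdiff, Finset.mem_Icc] at hk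
          simp [embedFrom, show ¬ l ≤ k by omega]
        · intro k hk
          simp [embedFrom, (Finset.mem_Icc.mp hk).1]
    _ = ∑ k ∈ Finset.Icc 1 N, ⟪a k, Aop VS emb (embedFrom emb l w) k⟫ :=
        h _ (embedFrom_zero hl w)
    _ = ⟪a l, w⟫ := by
        rw [Aop_embedFrom hemb_id hemb_comp, Finset.sum_eq_single_of_mem l
          (Finset.mem_Icc.mpr ⟨hl, hlN⟩) fun k _ hk => by
            rw [Pi.single_eq_of_ne hk, inner_zero_right], Pi.single_eq_same]

end Controls

variable (L : ℕ) (jL : VS L →L[ℝ] B (k₀ + 2))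
  (FS : ℕ → Type*) [∀ n, NormedAddCommGroup (FS n)] [∀ n, NormedSpace ℝ (FS n)]
  (QS : ℕ → Type*) [∀ n, TopologicalSpace (QS n)] [∀ n, ChartedSpace (FS n) (QS n)]
  [∀ n, IsManifold 𝓘(ℝ, FS n) (⊤ : ℕ∞) (QS n)]
  (actS : ∀ n, G k₀ → QS n → QS n)

theorem multiscale_product_normal_geodesic_controls
    (hemb_id : ∀ n, emb n n = ContinuousLinearMap.id ℝ (VS n))
    (hemb_comp : ∀ n m r : ℕ, n ≤ m → m ≤ r → (emb m r).comp (emb n m) = emb n r)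
    (q : ∀ n, ℝ → QS n) (p : ∀ n, ℝ → (FS n →L[ℝ] ℝ)) (u : ℝ → ∀ n, VS n)
    (hu0 : ∀ t, u t 0 = 0)
    -- the optimality condition `∂_u H_Q(q,p,u) = 0`
    (hopt : ∀ᵐ t ∂(volume.restrict (Set.Icc (0:ℝ) 1)),
      ∀ δ : ∀ n, VS n, δ 0 = 0 →
        (∑ l ∈ Finset.Icc 1 L,
          p l t (xiV B G ι (FS l) (QS l) k₀ (actS l) (VS L) jL (q l t) (emb l L (δ l)))) =
          ∑ l ∈ Finset.Icc 1 L, ⟪Aop VS emb (u t) l, Aop VS emb δ l⟫) :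
    ∀ᵐ t ∂(volume.restrict (Set.Icc (0:ℝ) 1)),
      (∀ l, 1 ≤ l → l ≤ L →
        Aop VS emb (u t) l =
          KV (VS l) (∑ m ∈ Finset.Icc l L,
            ((p m t).comp (xiL B G ι (FS m) (QS m) k₀ (actS m) 2 (q m t))).comp
              (jL.comp (emb l L)))) ∧
      (∀ l, 1 ≤ l → l ≤ L →
        u t l = ∑ k ∈ Finset.Icc 1 l,
          emb k l (KV (VS k) (∑ m ∈ Finset.Icc k L,
            ((p m t).comp (xiL B G ι (FS m) (QS m) k₀ (actS m) 2 (q m t))).comp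
              (jL.comp (emb k L))))) := by
  filter_upwards [hopt] with t ht
  have hAu : ∀ l, 1 ≤ l → l ≤ L →
      Aop VS emb (u t) l =
        KV (VS l) (∑ m ∈ Finset.Icc l L,
          ((p m t).comp (xiL B G ι (FS m) (QS m) k₀ (actS m) 2 (q m t))).comp
            (jL.comp (emb l L))) := by
    intro l hl hlL
    rw [eq_KV_sum_comp_emb hemb_id hemb_comp
      (fun n => ((p n t).comp (xiL B G ι (FS n) (QS n) k₀ (actS n) 2 (q n t))).comp
        (jL.comp (emb n L))) _ ht hl hlL]
    congr 1
    refine Finset.sum_congr rfl fun m hm => ?_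
    simp only [ContinuousLinearMap.comp_assoc, hemb_comp _ _ _ (Finset.mem_Icc.mp hm).1
      (Finset.mem_Icc.mp hm).2]
  refine ⟨hAu, fun l hl hlL => ?_⟩
  rw [eq_sum_emb_Aop hemb_id hemb_comp (hu0 t)]
  exact Finset.sum_congr rfl fun k hk =>
    by rw [hAu k (Finset.mem_Icc.mp hk).1 ((Finset.mem_Icc.mp hk).2.trans hlL)]
end
end
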